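/- Let p be a rational prime, B a positive integer, and let L be an algebraic extension of ℚ admitting a ring homomorphism into some finite field extension E of the p-adic field ℚ_p with [E:ℚ_p] ≤ B. If f ∈ ℤ[X] is a monic polynomial that is Eisenstein at p (all non-leading coefficients divisible by p and the constant coefficient not divisible by p²) and f has a root α ∈ L, then deg f ≤ B. -/
import Mathlib


/-- `L` has local degrees at the prime `p` bounded by `B`: there exist a finite field
extension `E` of `ℚ_p` with `[E : ℚ_p] ≤ B` and a ring homomorphism `L → E`. -/
def LocalDegreesBoundedBy (p : ℕ) (hp : p.Prime) (L : Type*) [Field L] (B : ℕ) : Prop :=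
  letI : Fact p.Prime := ⟨hp⟩
  ∃ (E : Type) (_ : Field E) (_ : Algebra ℚ_[p] E),
    FiniteDimensional ℚ_[p] E ∧ Module.finrank ℚ_[p] E ≤ B ∧ Nonempty (L →+* E)

/-- If `L` has local degrees at `p` bounded by `B`, then every monic
polynomial over `ℤ` which is Eisenstein at `p` and has a root in `L` has degree at
most `B`. -/
theorem eisenstein_root_degree_bound
    (p : ℕ) (hp : p.Prime) (B : ℕ) (hB : 0 < B)
    (L : IntermediateField ℚ (AlgebraicClosure ℚ))
    (hloc : LocalDegreesBoundedBy p hp L B)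
    (f : Polynomial ℤ) (hmonic : f.Monic)
    (hcoeff : ∀ i < f.natDegree, (p : ℤ) ∣ f.coeff i)
    (hconst : ¬ ((p : ℤ) ^ 2 ∣ f.coeff 0))
    (x : AlgebraicClosure ℚ) (hxL : x ∈ L) (hroot : Polynomial.aeval x f = 0) :
    f.natDegree ≤ B := by
  haveI : Fact p.Prime := ⟨hp⟩
  obtain ⟨E, _, _, hfd, hle, ⟨φ⟩⟩ := hloc
  -- the root inside L
  set x' : L := ⟨x, hxL⟩ with hx'
  have hx'root : Polynomial.aeval x' f = 0 := by
    have h1 : Polynomial.aeval ((algebraMap L (AlgebraicClosure ℚ)) x') f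
        = (algebraMap L (AlgebraicClosure ℚ)) (Polynomial.aeval x' f) :=
      (Polynomial.aeval_algebraMap_apply (AlgebraicClosure ℚ) x' f)
    have h2 : (algebraMap L (AlgebraicClosure ℚ)) x' = x := rfl
    rw [h2, hroot] at h1
    exact (map_eq_zero_iff _ (algebraMap L (AlgebraicClosure ℚ)).injective).mp h1.symm
  set y : E := φ x' with hy
  have hyroot : Polynomial.aeval y f = 0 := by
    have := Polynomial.aeval_algHom_apply φ.toIntAlgHom x' f
    rw [hx'root, map_zero] at this
    exact this
  -- degree positivity
  have hdeg : 0 < f.natDegree := by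
    by_contra h
    push_neg at h
    have : f = 1 := hmonic.natDegree_eq_zero.mp (Nat.le_zero.mp h)
    rw [this] at hroot
    simp at hroot
  -- Eisenstein over ℤ_[p]
  set g : Polynomial ℤ_[p] := f.map (Int.castRingHom ℤ_[p]) with hg
  have hgmonic : g.Monic := hmonic.map _
  have hgdeg : g.natDegree = f.natDegree := hmonic.natDegree_map _
  have hgeis : g.IsEisensteinAt (Ideal.span {(p : ℤ_[p])}) := by
    constructor
    · rw [hgmonic.leadingCoeff, Ideal.mem_span_singleton]
      exact fun h => PadicInt.prime_p.not_unit (isUnit_of_dvd_one h)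
    · intro n hn
      rw [hgdeg] at hn
      rw [hg, Polynomial.coeff_map, Ideal.mem_span_singleton]
      obtain ⟨c, hc⟩ := hcoeff n hn
      exact ⟨(c : ℤ_[p]), by rw [hc]; simp⟩
    · rw [Ideal.span_singleton_pow, Ideal.mem_span_singleton, hg, Polynomial.coeff_map]
      intro h
      apply hconst
      have := (PadicInt.pow_p_dvd_int_iff 2 (f.coeff 0)).mp h
      exact_mod_cast this
  have hgirr : Irreducible g :=
    hgeis.irreducible ((Ideal.span_singleton_prime (by exact_mod_cast hp.ne_zero)).mpr
      PadicInt.prime_p) hgmonic.isPrimitive (hgdeg ▸ hdeg)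
  -- irreducible over ℚ_[p]
  have hhirr : Irreducible (g.map (algebraMap ℤ_[p] ℚ_[p])) :=
    (Polynomial.Monic.irreducible_iff_irreducible_map_fraction_map hgmonic).mp hgirr
  set h : Polynomial ℚ_[p] := g.map (algebraMap ℤ_[p] ℚ_[p]) with hh
  have hhmonic : h.Monic := hgmonic.map _
  have hhdeg : h.natDegree = f.natDegree := by
    rw [hh, hgmonic.natDegree_map, hgdeg]
  have hheq : h = f.map (Int.castRingHom ℚ_[p]) := by
    rw [hh, hg, Polynomial.map_map]
    congr 1
  have hyrooth : Polynomial.aeval y h = 0 := by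
    rw [hheq]
    have : (f.map (Int.castRingHom ℚ_[p])) = f.map (algebraMap ℤ ℚ_[p]) := by
      rw [algebraMap_int_eq]
    rw [this, Polynomial.aeval_map_algebraMap]
    exact hyroot
  have hmin : minpoly ℚ_[p] y = h :=
    (minpoly.eq_of_irreducible_of_monic hhirr hyrooth hhmonic).symm
  calc f.natDegree = (minpoly ℚ_[p] y).natDegree := by rw [hmin, hhdeg]
    _ ≤ Module.finrank ℚ_[p] E := minpoly.natDegree_le y
    _ ≤ B := hle
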